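/- For λ = (r^c, t) with 0 < t ≤ r a partition of n, a map from the staircase word condition gives a bijection: cylindric semistandard Young tableaux of shape (r^c t)/∅/1 with content μ are in bijection with the single filling when μ_1 ≤ r, and there are none when μ_1 > r. Equivalently, the number of CSSYT of shape (r^c t)/∅/1 and content μ is 1 if μ_1 ≤ r and 0 otherwise. -/

import Mathlib

open MvPolynomial
open scoped Classical

noncomputable section

/-- A poset is `(3+1)`-free: no induced subposet consisting of a 3-chain
together with an element incomparable to all of it. -/
def ThreePlusOneFree (P : Type*) [PartialOrder P] : Prop :=
  ¬ ∃ a b c x : P, a < b ∧ b < c ∧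
    ¬(x ≤ a ∨ a ≤ x) ∧ ¬(x ≤ b ∨ b ≤ x) ∧ ¬(x ≤ c ∨ c ≤ x)

/-- The `P`-elementary function `e_k^P(u)`, the sum of `u_{i_1} ⋯ u_{i_k}`
over strict chains `i_1 <_P ⋯ <_P i_k`. -/
def eP (P : Type*) [Fintype P] [PartialOrder P] (k : ℕ) : MvPolynomial P ℤ :=
  ∑ f ∈ Finset.univ.filter (fun f : Fin k → P => ∀ a b : Fin k, a < b → f a < f b),
    ∏ i, X (f i)

/-- `e_k^P` for an integer index, vanishing for negative `k`. -/
def ePz (P : Type*) [Fintype P] [PartialOrder P] (k : ℤ) : MvPolynomial P ℤ :=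
  if 0 ≤ k then eP P k.toNat else 0

/-- Conjugate partition: `conj f c` is the length of column `c` (0-indexed)
of the diagram of `f`. -/
def conj (f : ℕ → ℕ) (c : ℕ) : ℕ := Set.ncard {i | c < f i}

/-- `f : ℕ → ℕ` (0-indexed list of parts) is a partition. -/
def IsPartition (f : ℕ → ℕ) : Prop := (∀ i, f (i + 1) ≤ f i) ∧ ∃ N, ∀ i, N ≤ i → f i = 0

/-- `λ/μ/d` is a cylindric shape. -/
def IsCylShape (lam mu : ℕ → ℕ) (d : ℕ) : Prop :=
  IsPartition lam ∧ IsPartition mu ∧ (∀ i, mu i ≤ lam i) ∧ 0 < lam 0 ∧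
    conj lam 0 ≤ conj lam (lam 0 - 1) + d ∧
    conj mu 0 ≤ conj mu (lam 0 - 1) + d ∧ d ≤ conj lam 0

section Arrays
variable {P : Type*} [PartialOrder P]

/-- Column-strictness of the array `A` (a total function; only values on the cells
of the shape `col(α,β)`, over `l` columns, matter): entries strictly increase
down each column. This is the defining condition for a `P`-array. -/
def ColStrict (A : ℕ → ℕ → P) (l : ℕ) (α β : ℕ → ℕ) : Prop :=
  ∀ c r r', c < l → β c ≤ r → r < r' → r' < α c → A r c < A r' c

/-- `col(α,β)` (with `β` a partition) is a skew partition shape. -/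
def IsSkewShape (l : ℕ) (α β : ℕ → ℕ) : Prop :=
  (∀ c, c + 1 < l → α (c + 1) ≤ α c ∧ β (c + 1) ≤ β c) ∧ ∀ c, c < l → β c ≤ α c

/-- Rows of `A` are weakly increasing in `P`: no entry is `>_P` its right neighbour. -/
def RowWeak (A : ℕ → ℕ → P) (l : ℕ) (α β : ℕ → ℕ) : Prop :=
  ∀ r c, c + 1 < l → β c ≤ r → r < α c → β (c + 1) ≤ r → r < α (c + 1) →
    ¬ A r (c + 1) < A r c

/-- `A` is a `P`-tableau of shape `col(α,β)`. -/
def IsPTableau (A : ℕ → ℕ → P) (l : ℕ) (α β : ℕ → ℕ) : Prop :=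
  IsSkewShape l α β ∧ ColStrict A l α β ∧ RowWeak A l α β

/-- The glued array `A^d`: columns `0,…,l-1` of `A` shifted down by `d`, and a copy
of column `0` of `A` as the extra column `l`. -/
def glueArr (A : ℕ → ℕ → P) (l d : ℕ) : ℕ → ℕ → P :=
  fun r c => if c < l then A (r - d) c else A r 0

/-- Column lengths of the glued shape. -/
def glueCol (f : ℕ → ℕ) (l d : ℕ) : ℕ → ℕ :=
  fun c => if c < l then f c + d else f 0

/-- `(r,j)` is an intersection point of columns `i < j` of `A`
(shape `col(α,β)`), with witness in column `i`. -/
def IsIntPoint (A : ℕ → ℕ → P) (α β : ℕ → ℕ) (i j r : ℕ) : Prop :=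
  i < j ∧ β j ≤ r ∧ r < α j ∧
    ∃ w, w + j = r + 1 + i ∧ β i ≤ w ∧ (α i ≤ w ∨ A r j < A w i)

/-- Columns `i < j` of `A` intersect. -/
def Intersecting (A : ℕ → ℕ → P) (α β : ℕ → ℕ) (i j : ℕ) : Prop :=
  ∃ r, IsIntPoint A α β i j r

/-- `(r,j)` is a `P`-minimal intersection point of the array `A` with columns `0,…,L`. -/
def PMinIP (A : ℕ → ℕ → P) (α β : ℕ → ℕ) (L j r : ℕ) : Prop :=
  j ≤ L ∧ (∃ i, IsIntPoint A α β i j r) ∧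
    ∀ j' r' i', j' ≤ L → IsIntPoint A α β i' j' r' → ¬ A r' j' < A r j

/-- `(r,j)` is the rightmost `P`-minimal intersection point. -/
def RightmostPMinIP (A : ℕ → ℕ → P) (α β : ℕ → ℕ) (L j r : ℕ) : Prop :=
  PMinIP A α β L j r ∧ ∀ j' r', PMinIP A α β L j' r' → j' ≤ j

/-- The cylindric swap `swap(A,i,j,d)` at the `P`-minimal intersection point `m` of
columns `i < j ≤ l` of `A^d` (the minimal intersection point is the lowest-row one,
since column `j` is a chain).  Everything is in the coordinates of `A`; the case
`j = l` is the wrap-around case, where entries move between column `i` and column `0`. -/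
def swapArr (A : ℕ → ℕ → P) (l d i j : ℕ) (α β : ℕ → ℕ) : ℕ → ℕ → P :=
  let m := sInf {r | IsIntPoint (glueArr A l d) (glueCol α l d) (glueCol β l d) i j r}
  if j < l then
    fun r c =>
      if c = i ∧ m + 1 + i ≤ r + j + d then A (r + (j - i)) j
      else if c = j ∧ m + 1 ≤ r + d then A (r - (j - i)) i
      else A r c
  else
    fun r c =>
      if c = i ∧ m + 1 + i ≤ r + j + d then A (r + (j - i) + d) 0
      else if c = 0 ∧ m + 1 ≤ r then A (r - (d + (j - i))) i
      else A r c

end Arrays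

/-- A cylindric `P`-tableau of shape `λ/μ/d`, encoded column by column:
`T c p` is the entry of column `c` in the `p`-th cell from the top
(global row `conj μ c + p`).  The condition is that the glued filling `T^d`
is a `P`-tableau: the glued shape is a skew shape, columns strictly increase
in `P`, and rows (including the wrap-around adjacency between the last column
and the copy of column `0` shifted up by `d`) weakly increase in `P`. -/
def IsCylTab {P : Type*} [PartialOrder P] (lam mu : ℕ → ℕ) (d : ℕ)
    (T : ∀ c : Fin (lam 0), Fin (conj lam c - conj mu c) → P) : Prop :=
  (∀ c, c + 1 < lam 0 → conj lam (c + 1) ≤ conj lam c ∧ conj mu (c + 1) ≤ conj mu c) ∧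
  (∀ c, c < lam 0 → conj mu c ≤ conj lam c) ∧
  (0 < lam 0 → conj lam 0 ≤ conj lam (lam 0 - 1) + d ∧ conj mu 0 ≤ conj mu (lam 0 - 1) + d) ∧
  (∀ c p q, p < q → T c p < T c q) ∧
  (∀ (c : Fin (lam 0)) (hc : c.1 + 1 < lam 0)
      (p : Fin (conj lam c.1 - conj mu c.1)) (q : Fin (conj lam (c.1 + 1) - conj mu (c.1 + 1))),
      conj mu c.1 + p.1 = conj mu (c.1 + 1) + q.1 → ¬ T ⟨c.1 + 1, hc⟩ q < T c p) ∧
  (∀ (h0 : 0 < lam 0) (p : Fin (conj lam (lam 0 - 1) - conj mu (lam 0 - 1)))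
      (q : Fin (conj lam 0 - conj mu 0)),
      conj mu (lam 0 - 1) + p.1 + d = conj mu 0 + q.1 →
      ¬ T ⟨0, h0⟩ q < T ⟨lam 0 - 1, Nat.sub_lt h0 Nat.one_pos⟩ p)

/-- The `u`-monomial weight `u^T` of a tableau. -/
def uT {P : Type*} (lam mu : ℕ → ℕ)
    (T : ∀ c : Fin (lam 0), Fin (conj lam c - conj mu c) → P) : MvPolynomial P ℤ :=
  ∏ c, ∏ p, X (T c p)

/-- Number of occurrences of the value `x` in the tableau `T`. -/
def tabCount {P : Type*} (lam mu : ℕ → ℕ)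
    (T : ∀ c : Fin (lam 0), Fin (conj lam c - conj mu c) → P) (x : P) : ℕ :=
  ∑ c, (Finset.univ.filter (fun p => T c p = x)).card

/-- `T` is standard: it contains each element of `P` exactly once. -/
def IsStandardTab {P : Type*} (lam mu : ℕ → ℕ)
    (T : ∀ c : Fin (lam 0), Fin (conj lam c - conj mu c) → P) : Prop :=
  ∀ x : P, tabCount lam mu T x = 1

/-- The chromatic symmetric polynomial of the incomparability graph `inc(P)`,
in the variables `x_0, …, x_{N-1}`. -/
def chromPoly (P : Type*) [Fintype P] [PartialOrder P] (N : ℕ) : MvPolynomial (Fin N) ℤ :=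
  ∑ κ ∈ Finset.univ.filter
      (fun κ : P → Fin N => ∀ a b : P, a ≠ b → ¬(a ≤ b ∨ b ≤ a) → κ a ≠ κ b),
    ∏ v, X (κ v)

end

/-!
Read a cylindric tableau of shape `(r^c t)/∅/1` row by row, top to bottom: with `R = λ₁`
columns, the cell in row `p` of column `col` becomes the letter at position `p * R + col` of a
word of length `n = rc + t`. The row conditions, including the wrap-around from the last
column to the first column one row lower, say exactly that this word is weakly increasing, and
column strictness says that `w k < w (k + R)`. A weakly increasing word is determined by its
content, and it satisfies `w k < w (k + R)` iff no letter occurs more than `R` times. For a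
partition `μ` of `rc + t` the latter means `μ₁ ≤ r`.
-/

open Finset

section Words

variable {α : Type*} [LinearOrder α] {n : ℕ}

def IsStaircaseWord (R : ℕ) (w : Fin n → α) : Prop :=
  Monotone w ∧ ∀ i j : Fin n, (i : ℕ) + R ≤ j → w i < w j

theorem List.count_ofFn (w : Fin n → α) (a : α) : (List.ofFn w).count a = #{k | w k = a} := by
  rw [← Multiset.coe_count, ← Fin.univ_val_map, Multiset.count_map, Finset.card_def,
    Finset.filter_val]
  simp only [eq_comm]

theorem Monotone.eq_of_card_fiber_eq {f g : Fin n → α} (hf : Monotone f) (hg : Monotone g)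
    (h : ∀ a, #{k | f k = a} = #{k | g k = a}) : f = g :=
  List.ofFn_injective <| List.Perm.eq_of_sortedLE (List.sortedLE_ofFn_iff.2 hf)
    (List.sortedLE_ofFn_iff.2 hg) <|
      List.perm_iff_count.2 fun a => by rw [List.count_ofFn, List.count_ofFn, h]

theorem exists_monotone_card_fiber_eq {mu : α → ℕ} (hmu : (Function.support mu).Finite)
    (hsum : ∑ᶠ a, mu a = n) : ∃ w : Fin n → α, Monotone w ∧ ∀ a, #{k | w k = a} = mu a := by
  set s := (Finsupp.ofSupportFinite mu hmu).toMultiset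
  have hlen : s.sort.length = n := by
    rw [Multiset.length_sort, Finsupp.card_toMultiset, Finsupp.sum, ← hsum,
      finsum_eq_sum mu hmu, Finsupp.ofSupportFinite_support]
    rfl
  subst hlen
  refine ⟨s.sort.get, (List.sortedLE_iff_pairwise.2 (s.pairwise_sort _)).monotone_get,
    fun a => ?_⟩
  rw [← List.count_ofFn, List.ofFn_get, ← Multiset.coe_count, Multiset.sort_eq,
    Finsupp.count_toMultiset]
  rfl

theorem isStaircaseWord_iff {R : ℕ} {w : Fin n → α} :
    IsStaircaseWord R w ↔ Monotone w ∧ ∀ a, #{k | w k = a} ≤ R := by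
  refine and_congr_right fun hw => ⟨fun hR a => ?_, fun hR i j hij => ?_⟩
  · by_contra! hlt
    have hne : ({k | w k = a} : Finset (Fin n)).Nonempty := card_pos.1 (by omega)
    set s : Finset (Fin n) := {k | w k = a}
    have hsub : s ⊆ Icc (s.min' hne) (s.max' hne) := fun k hk =>
      mem_Icc.2 ⟨s.min'_le k hk, s.le_max' k hk⟩
    have hcard := hlt.trans_le (card_le_card hsub)
    rw [Fin.card_Icc] at hcard
    have hmin := (mem_filter.1 (s.min'_mem hne)).2
    have hmax := (mem_filter.1 (s.max'_mem hne)).2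
    exact (hR _ _ (by omega)).ne (hmin.trans hmax.symm)
  · by_contra! hji
    have hsub : Icc i j ⊆ ({k | w k = w i} : Finset (Fin n)) := fun k hk => by
      rw [mem_Icc] at hk
      simpa using le_antisymm ((hw hk.2).trans hji) (hw hk.1)
    have hcard := (card_le_card hsub).trans (hR (w i))
    rw [Fin.card_Icc] at hcard
    omega

theorem card_staircaseWord (R : ℕ) {mu : α → ℕ} (hmu : (Function.support mu).Finite)
    (hsum : ∑ᶠ a, mu a = n) :
    Nat.card {w : Fin n → α // IsStaircaseWord R w ∧ ∀ a, #{k | w k = a} = mu a} =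
      if ∀ a, mu a ≤ R then 1 else 0 := by
  simp only [isStaircaseWord_iff]
  split_ifs with hR
  · obtain ⟨w, hw, hcount⟩ := exists_monotone_card_fiber_eq hmu hsum
    refine Nat.card_eq_one_iff_unique.2 ⟨⟨fun x y => Subtype.ext ?_⟩,
      ⟨w, ⟨hw, fun a => (hcount a).trans_le (hR a)⟩, hcount⟩⟩
    exact x.2.1.1.eq_of_card_fiber_eq y.2.1.1 fun a => (x.2.2 a).trans (y.2.2 a).symm
  · obtain ⟨a, ha⟩ := not_forall.1 hR
    exact Nat.card_eq_zero.2 (Or.inl ⟨fun ⟨w, ⟨_, hle⟩, hcount⟩ => ha (hcount a ▸ hle a)⟩)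

end Words

section Reading

variable {R n : ℕ} {len : Fin R → ℕ}

def readingEquiv (hR : 0 < R) (hlen : ∀ col p, p < len col ↔ p * R + col < n) :
    (Σ col, Fin (len col)) ≃ Fin n where
  toFun x := ⟨x.2 * R + x.1, (hlen x.1 x.2).1 x.2.2⟩
  invFun k :=
    ⟨⟨k % R, Nat.mod_lt k hR⟩, ⟨k / R, (hlen _ _).2 (by simp [Nat.div_add_mod'])⟩⟩
  left_inv := by
    rintro ⟨col, p⟩
    have hdiv : (p * R + col) / R = p := by
      rw [Nat.add_comm, Nat.add_mul_div_right _ _ hR, Nat.div_eq_of_lt col.2, Nat.zero_add]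
    have hmod : (p * R + col) % R = col := by
      rw [Nat.add_comm, Nat.add_mul_mod_self_right, Nat.mod_eq_of_lt col.2]
    exact Sigma.ext (Fin.ext hmod) ((Fin.heq_ext_iff (congrArg len (Fin.ext hmod))).2 hdiv)
  right_inv k := Fin.ext (Nat.div_add_mod' k R)

variable {α : Type*} (hR : 0 < R) (hlen : ∀ col p, p < len col ↔ p * R + col < n)

def readingWord : (∀ col, Fin (len col) → α) ≃ (Fin n → α) :=
  (Equiv.piCurry fun _ _ => α).symm.trans ((readingEquiv hR hlen).arrowCongr (Equiv.refl α))

theorem apply_eq_readingWord (T : ∀ col, Fin (len col) → α) {col : Fin R}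
    {p : Fin (len col)} {k : Fin n} (hk : p * R + col = k) : T col p = readingWord hR hlen T k := by
  obtain rfl : readingEquiv hR hlen ⟨col, p⟩ = k := Fin.ext hk
  exact congrArg (Sigma.uncurry T) ((readingEquiv hR hlen).symm_apply_apply ⟨col, p⟩).symm

theorem apply_eq_readingWord_mk (T : ∀ col, Fin (len col) → α) (col : Fin R)
    (p : Fin (len col)) : T col p = readingWord hR hlen T ⟨p * R + col, (hlen col p).1 p.2⟩ :=
  apply_eq_readingWord hR hlen T rfl

end Reading

theorem conj_zero (c : ℕ) : conj (fun _ => 0) c = 0 := by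
  simp [conj]

theorem Fin.monotone_of_le_succ {α : Type*} [Preorder α] {n : ℕ} {w : Fin n → α}
    (h : ∀ i j : Fin n, (j : ℕ) = i + 1 → w i ≤ w j) : Monotone w := by
  cases n with
  | zero => exact fun i => i.elim0
  | succ n => exact Fin.monotone_iff_le_succ.2 fun i => h _ _ (by simp)

section CylTab

variable {α : Type*} {lam : ℕ → ℕ} {n : ℕ} (hR : 0 < lam 0)
  (hlen : ∀ (col : Fin (lam 0)) (p : ℕ),
    p < conj lam col - conj (fun _ => 0) col ↔ p * lam 0 + col < n)
  (T : ∀ col : Fin (lam 0), Fin (conj lam col - conj (fun _ => 0) col) → α)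

include hlen in
theorem lt_conj_iff {col : ℕ} (hcol : col < lam 0) (p : ℕ) :
    p < conj lam col ↔ p * lam 0 + col < n := by
  simpa [conj_zero] using hlen ⟨col, hcol⟩ p

include hlen in
theorem cylShape_of_lt_conj_iff :
    (∀ c, c + 1 < lam 0 → conj lam (c + 1) ≤ conj lam c ∧
      conj (fun _ => 0) (c + 1) ≤ conj (fun _ => 0) c) ∧
    (∀ c, c < lam 0 → conj (fun _ => 0) c ≤ conj lam c) ∧
    (0 < lam 0 → conj lam 0 ≤ conj lam (lam 0 - 1) + 1 ∧
      conj (fun _ => 0) 0 ≤ conj (fun _ => 0) (lam 0 - 1) + 1) := by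
  simp only [conj_zero, zero_le, and_true, implies_true, true_and]
  refine ⟨fun c hc => le_of_forall_lt fun p hp => ?_,
    fun hR => le_of_forall_lt fun p hp => ?_⟩
  · rw [lt_conj_iff hlen hc] at hp
    rw [lt_conj_iff hlen (by omega)]
    omega
  · rw [lt_conj_iff hlen hR] at hp
    rcases p with _ | p
    · omega
    · rw [Nat.add_lt_add_iff_right, lt_conj_iff hlen (by omega)]
      rw [Nat.add_mul] at hp
      omega

variable [LinearOrder α]

theorem tabCount_eq_card_fiber_readingWord (v : α) :
    tabCount lam (fun _ => 0) T v = #{k | readingWord hR hlen T k = v} := by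
  rw [tabCount, ← Finset.card_sigma]
  refine Finset.card_equiv (readingEquiv hR hlen) fun x => ?_
  simp only [mem_sigma, mem_filter, mem_univ, true_and]
  rw [apply_eq_readingWord hR hlen T (k := readingEquiv hR hlen x) rfl]

/-- The wrap-around condition compares the last cell of row `p` with the first cell of row
`p + 1`, which are consecutive letters of the reading word. -/
theorem rowWeak_iff_monotone :
    ((∀ (c : Fin (lam 0)) (hc : c.1 + 1 < lam 0)
        (p : Fin (conj lam c.1 - conj (fun _ => 0) c.1))
        (q : Fin (conj lam (c.1 + 1) - conj (fun _ => 0) (c.1 + 1))),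
        conj (fun _ => 0) c.1 + p.1 = conj (fun _ => 0) (c.1 + 1) + q.1 →
        ¬ T ⟨c.1 + 1, hc⟩ q < T c p) ∧
      (∀ (h0 : 0 < lam 0) (p : Fin (conj lam (lam 0 - 1) - conj (fun _ => 0) (lam 0 - 1)))
        (q : Fin (conj lam 0 - conj (fun _ => 0) 0)),
        conj (fun _ => 0) (lam 0 - 1) + p.1 + 1 = conj (fun _ => 0) 0 + q.1 →
        ¬ T ⟨0, h0⟩ q < T ⟨lam 0 - 1, Nat.sub_lt h0 Nat.one_pos⟩ p)) ↔
      Monotone (readingWord hR hlen T) := by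
  simp only [conj_zero, zero_add]
  constructor
  · rintro ⟨hrow, hwrap⟩
    refine Fin.monotone_of_le_succ fun i j hij => ?_
    have hi := Nat.div_add_mod' i (lam 0)
    have hmod := Nat.mod_lt i hR
    by_cases hc : i % lam 0 + 1 < lam 0
    · have hp : i / lam 0 < conj lam (i % lam 0) := (lt_conj_iff hlen hmod _).2 (by omega)
      have hq : i / lam 0 < conj lam (i % lam 0 + 1) := (lt_conj_iff hlen hc _).2 (by omega)
      have := hrow ⟨i % lam 0, hmod⟩ hc ⟨i / lam 0, by simpa [conj_zero] using hp⟩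
        ⟨i / lam 0, by simpa [conj_zero] using hq⟩ rfl
      rwa [apply_eq_readingWord hR hlen T (k := j) (by simp; omega),
        apply_eq_readingWord hR hlen T (k := i) (by simp; omega), not_lt] at this
    · have hp : i / lam 0 < conj lam (lam 0 - 1) := (lt_conj_iff hlen (by omega) _).2 (by omega)
      have hq : i / lam 0 + 1 < conj lam 0 :=
        (lt_conj_iff hlen hR _).2 (by rw [Nat.add_mul]; omega)
      have := hwrap hR ⟨i / lam 0, by simpa [conj_zero] using hp⟩
        ⟨i / lam 0 + 1, by simpa [conj_zero] using hq⟩ rfl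
      rwa [apply_eq_readingWord hR hlen T (k := j) (by simp [Nat.add_mul]; omega),
        apply_eq_readingWord hR hlen T (k := i) (by simp; omega), not_lt] at this
  · intro hw
    refine ⟨fun c hc p q hpq => ?_, fun h0 p q hpq => ?_⟩
    · rw [apply_eq_readingWord_mk hR hlen T, apply_eq_readingWord_mk hR hlen T, not_lt]
      exact hw (Fin.mk_le_mk.2 (by simp only [hpq]; omega))
    · rw [apply_eq_readingWord_mk hR hlen T, apply_eq_readingWord_mk hR hlen T, not_lt]
      exact hw (Fin.mk_le_mk.2 (by simp only [← hpq, Nat.add_mul]; omega))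

theorem colStrict_iff (hw : Monotone (readingWord hR hlen T)) :
    (∀ c p q, p < q → T c p < T c q) ↔ IsStaircaseWord (lam 0) (readingWord hR hlen T) := by
  refine ⟨fun hcol => ⟨hw, fun i j hij => ?_⟩, fun hs c p q hpq => ?_⟩
  · have hmod := Nat.mod_lt i hR
    have hi := Nat.div_add_mod' i (lam 0)
    have hp : i / lam 0 < conj lam (i % lam 0) := (lt_conj_iff hlen hmod _).2 (by omega)
    have hq : i / lam 0 + 1 < conj lam (i % lam 0) :=
      (lt_conj_iff hlen hmod _).2 (by rw [Nat.add_mul]; omega)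
    have := hcol ⟨i % lam 0, hmod⟩ ⟨i / lam 0, by simpa [conj_zero] using hp⟩
      ⟨i / lam 0 + 1, by simpa [conj_zero] using hq⟩ (Fin.mk_lt_mk.2 (Nat.lt_succ_self _))
    rw [apply_eq_readingWord hR hlen T (k := i) (by simp; omega),
      apply_eq_readingWord hR hlen T (k := ⟨i + lam 0, by omega⟩)
        (by simp [Nat.add_mul]; omega)] at this
    exact this.trans_le (hw (Fin.mk_le_mk.2 hij))
  · rw [apply_eq_readingWord_mk hR hlen T, apply_eq_readingWord_mk hR hlen T]
    have : (p + 1 : ℕ) * lam 0 ≤ q * lam 0 := Nat.mul_le_mul_right _ hpq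
    exact hs.2 _ _ (by simp only [Nat.add_mul] at this ⊢; omega)

theorem isCylTab_iff :
    IsCylTab lam (fun _ => 0) 1 T ↔ IsStaircaseWord (lam 0) (readingWord hR hlen T) := by
  obtain ⟨hshape₁, hshape₂, hshape₃⟩ := cylShape_of_lt_conj_iff hlen
  rw [IsCylTab, and_iff_right hshape₁, and_iff_right hshape₂, and_iff_right hshape₃,
    rowWeak_iff_monotone hR hlen T]
  exact ⟨fun ⟨hcol, hw⟩ => (colStrict_iff hR hlen T hw).1 hcol,
    fun hs => ⟨(colStrict_iff hR hlen T hs.1).2 hs, hs.1⟩⟩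

end CylTab

theorem IsPartition.antitone {f : ℕ → ℕ} (hf : IsPartition f) : Antitone f :=
  antitone_nat_of_succ_le hf.1

theorem IsPartition.finite_support {f : ℕ → ℕ} (hf : IsPartition f) :
    (Function.support f).Finite := by
  obtain ⟨N, hN⟩ := hf.2
  refine (Set.finite_Iio N).subset fun i hi => ?_
  by_contra h
  exact hi (hN i (not_lt.1 h))

def rectShape (r c t : ℕ) : ℕ → ℕ := fun i => if i < c then r else if i = c then t else 0

section RectShape

variable {r c t : ℕ}

theorem rectShape_zero : rectShape r c t 0 = if 0 < c then r else t := by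
  rcases Nat.eq_zero_or_pos c with rfl | hc
  · simp [rectShape]
  · simp [rectShape, hc]

theorem conj_rectShape {col : ℕ} (hcol : col < r) :
    conj (rectShape r c t) col = if col < t then c + 1 else c := by
  have hset : {i | col < rectShape r c t i} = if col < t then Set.Iic c else Set.Iio c := by
    ext i
    simp only [rectShape, Set.mem_ofPred_eq]
    split_ifs <;> simp <;> omega
  rw [conj, hset]
  split_ifs <;> simp [← Finset.coe_Iic, ← Finset.coe_Iio, Set.ncard_coe_finset]

theorem mul_add_lt_mul_add_iff {R p col : ℕ} (hcol : col < R) (htR : t ≤ R) :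
    p * R + col < R * c + t ↔ p < if col < t then c + 1 else c := by
  split_ifs with hct
  · constructor
    · intro h
      by_contra! hp
      nlinarith
    · intro h
      nlinarith
  · constructor
    · intro h
      by_contra! hp
      nlinarith
    · intro h
      nlinarith

theorem lt_conj_rectShape_iff (htr : t ≤ r) {col : ℕ} (hcol : col < rectShape r c t 0)
    (p : ℕ) : p < conj (rectShape r c t) col ↔ p * rectShape r c t 0 + col < r * c + t := by
  rw [rectShape_zero] at hcol ⊢
  rcases Nat.eq_zero_or_pos c with rfl | hc
  · simp only [lt_irrefl, if_false] at hcol ⊢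
    rw [conj_rectShape (by omega)]
    simpa using (mul_add_lt_mul_add_iff hcol le_rfl (c := 0)).symm
  · simp only [hc, if_true] at hcol ⊢
    rw [conj_rectShape hcol]
    exact (mul_add_lt_mul_add_iff hcol htr).symm

theorem forall_le_rectShape_zero_iff (htr : t ≤ r) {mu : ℕ → ℕ} (hmu : IsPartition mu)
    (hsum : ∑ᶠ v, mu v = r * c + t) : (∀ v, mu v ≤ rectShape r c t 0) ↔ mu 0 ≤ r := by
  rw [rectShape_zero]
  rcases Nat.eq_zero_or_pos c with rfl | hc
  · simp only [lt_irrefl, if_false, mul_zero, zero_add] at hsum ⊢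
    refine iff_of_true (fun v => ?_) ?_
    · exact hsum ▸ single_le_finsum v hmu.finite_support fun _ => Nat.zero_le _
    · exact (hsum ▸ single_le_finsum 0 hmu.finite_support fun _ => Nat.zero_le _).trans htr
  · rw [if_pos hc]
    exact ⟨fun h => h 0, fun h v => (hmu.antitone (Nat.zero_le v)).trans h⟩

end RectShape

/-- the number of cylindric semistandard Young tableaux of shape
`(r^c t)/∅/1` (entries in the total order `ℕ`) with content `μ` (the value `v`
occurring `μ v` times, `μ` a partition of `n = rc + t`) is `1` if `μ₁ ≤ r` and `0`
otherwise. -/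
theorem stmt_11 (r c t : ℕ) (ht : 0 < t) (htr : t ≤ r)
    (mu : ℕ → ℕ) (hmu : IsPartition mu) (hsum : ∑ᶠ v, mu v = r * c + t) :
    Nat.card {T : ∀ col : Fin ((fun i => if i < c then r else if i = c then t else 0) 0),
          Fin (conj (fun i => if i < c then r else if i = c then t else 0) col
            - conj (fun _ => 0) col) → ℕ //
        IsCylTab (fun i => if i < c then r else if i = c then t else 0) (fun _ => 0) 1 T ∧
        ∀ v : ℕ, tabCount (fun i => if i < c then r else if i = c then t else 0)
            (fun _ => 0) T v = mu v}
      = if mu 0 ≤ r then 1 else 0 := by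
  have hR : 0 < rectShape r c t 0 := by rw [rectShape_zero]; split_ifs <;> omega
  have hlen (col : Fin (rectShape r c t 0)) (p : ℕ) :
      p < conj (rectShape r c t) col - conj (fun _ => 0) col ↔
        p * rectShape r c t 0 + col < r * c + t := by
    simpa [conj_zero] using lt_conj_rectShape_iff htr col.2 p
  refine ((Nat.card_congr ((readingWord hR hlen).subtypeEquiv fun T =>
    and_congr (isCylTab_iff hR hlen T) ?_)).trans
      (card_staircaseWord _ hmu.finite_support hsum)).trans
        (if_congr (forall_le_rectShape_zero_iff htr hmu hsum) rfl rfl)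
  exact forall_congr' fun v => Eq.congr_left (tabCount_eq_card_fiber_readingWord hR hlen T v)
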